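/- The operator H̃ has no eigenvalues: there exist no λ ∈ ℂ and no nonzero f ∈ ℓ²(F₂ × ℕ) with H̃f = λf. -/

import Mathlib

noncomputable section

/-- `ℓ²(F₂ × ℕ)`, where `F₂` is the free group on two generators. -/
abbrev l2TreeRays : Type := lp (fun _ : FreeGroup (Fin 2) × ℕ => ℂ) 2

open Filter Topology Complex


/-- If the squared norms are summable, the sequence tends to zero. -/
lemma tendsto_zero_of_summable_sq {a : ℕ → ℂ} (h : Summable fun n => ‖a n‖^2) :
    Tendsto a atTop (𝓝 0) := by
  rw [tendsto_zero_iff_norm_tendsto_zero]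
  have h1 : Tendsto (fun n => ‖a n‖^2) atTop (𝓝 0) := h.tendsto_atTop_zero
  have h2 : Tendsto (fun n => Real.sqrt (‖a n‖^2)) atTop (𝓝 (Real.sqrt 0)) :=
    (Real.continuous_sqrt.continuousAt).tendsto.comp h1
  simpa [Real.sqrt_sq (norm_nonneg _)] using h2

lemma tendsto_zero_of_sq_le {u : ℕ → ℂ} {b : ℕ → ℝ} (hb : Tendsto b atTop (𝓝 0))
    (h : ∀ n, ‖u n‖^2 ≤ b n) : Tendsto u atTop (𝓝 0) := by
  rw [tendsto_zero_iff_norm_tendsto_zero]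
  have hsq : Tendsto (fun n => ‖u n‖^2) atTop (𝓝 0) :=
    squeeze_zero (fun n => sq_nonneg _) h hb
  have h2 : Tendsto (fun n => Real.sqrt (‖u n‖^2)) atTop (𝓝 (Real.sqrt 0)) :=
    (Real.continuous_sqrt.continuousAt).tendsto.comp hsq
  simpa [Real.sqrt_sq (norm_nonneg _)] using h2


lemma rec_zero_of_abs_le_two {ν : ℝ} (hν : |ν| ≤ 2) {a : ℕ → ℂ}
    (ha : ∀ n, a (n+2) = ν * a (n+1) - a n) (h0 : Tendsto a atTop (𝓝 0)) :
    ∀ n, a n = 0 := by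
  set Q : ℕ → ℝ := fun n => normSq (a (n+1)) + normSq (a n)
      - ν * (a (n+1) * (starRingEnd ℂ) (a n)).re with hQ
  have hcons : ∀ n, Q (n+1) = Q n := by
    intro n
    simp only [hQ, ha n]
    simp only [normSq_apply, Complex.mul_re, Complex.sub_re, Complex.sub_im,
      Complex.mul_im, Complex.conj_re, Complex.conj_im, Complex.ofReal_re,
      Complex.ofReal_im]
    ring
  have hconst : ∀ n, Q n = Q 0 := by
    intro n; induction n with
    | zero => rfl
    | succ k ih => rw [hcons k, ih]
  have htend : Tendsto Q atTop (𝓝 0) := by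
    have h1 : Tendsto (fun n => a (n+1)) atTop (𝓝 0) := h0.comp (tendsto_add_atTop_nat 1)
    have hns : Tendsto (fun n => normSq (a (n+1)) + normSq (a n)
        - ν * (a (n+1) * (starRingEnd ℂ) (a n)).re) atTop
        (𝓝 (normSq 0 + normSq 0 - ν * ((0:ℂ) * (starRingEnd ℂ) (0:ℂ)).re)) := by
      apply Tendsto.sub
      · exact ((continuous_normSq.tendsto _).comp h1).add ((continuous_normSq.tendsto _).comp h0)
      · exact (tendsto_const_nhds.mul ((Complex.continuous_re.tendsto _).comp
          ((h1.mul (((continuous_conj).tendsto _).comp h0)))))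
    have hval : normSq (0:ℂ) + normSq (0:ℂ) - ν * ((0:ℂ) * (starRingEnd ℂ) (0:ℂ)).re = 0 := by
      simp
    rw [hval] at hns
    exact hns
  have hQ0 : Q 0 = 0 := by
    have hc : Tendsto (fun _ : ℕ => Q 0) atTop (𝓝 0) := by
      exact Filter.Tendsto.congr hconst htend
    exact (tendsto_nhds_unique hc tendsto_const_nhds).symm
  have hQzero : ∀ n, Q n = 0 := fun n => (hconst n).trans hQ0
  rcases lt_or_eq_of_le hν with hlt | heq
  · have key : ∀ n, normSq (a (n+1)) + normSq (a n) = 0 := by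
      intro n
      have hQn := hQzero n
      simp only [hQ] at hQn
      have hb : |ν * (a (n+1) * (starRingEnd ℂ) (a n)).re|
          ≤ |ν| * (‖a (n+1)‖ * ‖a n‖) := by
        rw [abs_mul]
        gcongr
        calc |(a (n+1) * (starRingEnd ℂ) (a n)).re| ≤ ‖a (n+1) * (starRingEnd ℂ) (a n)‖ :=
              Complex.abs_re_le_norm _
        _ = ‖a (n+1)‖ * ‖a n‖ := by rw [norm_mul]; simp
      have h2ab : 2 * (‖a (n+1)‖ * ‖a n‖) ≤ ‖a (n+1)‖^2 + ‖a n‖^2 := by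
        nlinarith [sq_nonneg (‖a (n+1)‖ - ‖a n‖)]
      have hnsq : normSq (a (n+1)) = ‖a (n+1)‖^2 := by rw [normSq_eq_norm_sq]
      have hnsq2 : normSq (a n) = ‖a n‖^2 := by rw [normSq_eq_norm_sq]
      nlinarith [abs_nonneg ν, norm_nonneg (a (n+1)), norm_nonneg (a n),
        le_abs_self (ν * (a (n+1) * (starRingEnd ℂ) (a n)).re),
        mul_nonneg (norm_nonneg (a (n+1))) (norm_nonneg (a n))]
    intro n
    have hk := key n
    have h2 : normSq (a n) = 0 := by nlinarith [normSq_nonneg (a (n+1)), normSq_nonneg (a n)]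
    exact normSq_eq_zero.mp h2
  · have hν2 : ν^2 = 4 := by rw [← _root_.sq_abs, heq]; norm_num
    have hstep : ∀ n, a (n+1) = (ν/2 : ℝ) * a n := by
      intro n
      have hkey : normSq (a (n+1) - (ν/2 : ℝ) * a n) = Q n := by
        simp only [hQ, normSq_apply, Complex.sub_re, Complex.sub_im, Complex.mul_re,
          Complex.mul_im, Complex.conj_re, Complex.conj_im, Complex.ofReal_re,
          Complex.ofReal_im]
        linear_combination (((a n).re^2 + (a n).im^2)/4) * hν2
      rw [hQzero n] at hkey
      have h3 := normSq_eq_zero.mp hkey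
      linear_combination h3
    have hnorm : ∀ n, ‖a n‖ = ‖a 0‖ := by
      intro n; induction n with
      | zero => rfl
      | succ k ih =>
        rw [hstep k, norm_mul, ← ih]
        have hone : ‖((ν/2:ℝ):ℂ)‖ = 1 := by
          rw [Complex.norm_real, Real.norm_eq_abs, abs_div, heq]; norm_num
        rw [hone, one_mul]
    have h00 : ‖a 0‖ = 0 := by
      have hn0 : Tendsto (fun n => ‖a n‖) atTop (𝓝 0) := by simpa using h0.norm
      have hc : Tendsto (fun _ : ℕ => ‖a 0‖) atTop (𝓝 0) := by
        simpa only [hnorm] using hn0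
      exact (tendsto_nhds_unique hc tendsto_const_nhds).symm
    intro n
    have hcn := hnorm n; rw [h00] at hcn
    exact norm_eq_zero.mp hcn


/-- the root of `r² - ν r + 1 = 0` of absolute value `< 1` (for `|ν| > 2`). -/
def smallRoot (ν : ℝ) : ℝ :=
  if 0 ≤ ν then (ν - Real.sqrt (ν^2 - 4))/2 else (ν + Real.sqrt (ν^2 - 4))/2

lemma smallRoot_root {ν : ℝ} (hν : 2 < |ν|) :
    (smallRoot ν)^2 - ν * smallRoot ν + 1 = 0 := by
  have h4 : (0:ℝ) ≤ ν^2 - 4 := by nlinarith [_root_.sq_abs ν, abs_nonneg ν]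
  have hD : Real.sqrt (ν^2-4) ^ 2 = ν^2 - 4 := Real.sq_sqrt h4
  unfold smallRoot
  split <;> nlinarith [hD]

lemma smallRoot_ne_zero {ν : ℝ} (hν : 2 < |ν|) : smallRoot ν ≠ 0 := by
  intro h
  have := smallRoot_root hν
  rw [h] at this; norm_num at this

lemma smallRoot_abs_lt_one {ν : ℝ} (hν : 2 < |ν|) : |smallRoot ν| < 1 := by
  have h4 : (0:ℝ) ≤ ν^2 - 4 := by nlinarith [_root_.sq_abs ν, abs_nonneg ν]
  have hD : Real.sqrt (ν^2-4) ^ 2 = ν^2 - 4 := Real.sq_sqrt h4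
  have hDnn : 0 ≤ Real.sqrt (ν^2-4) := Real.sqrt_nonneg _
  rw [abs_lt]
  unfold smallRoot
  rcases le_or_gt 0 ν with h | h
  · have hν2 : 2 < ν := by rcases abs_cases ν with ⟨he,_⟩|⟨he,_⟩ <;> linarith
    have hDlt : Real.sqrt (ν^2-4) < ν := by
      nlinarith [hDnn, hD]
    have h1 : 0 < (ν - Real.sqrt (ν^2-4))/2 := by linarith
    have h2 : (ν - Real.sqrt (ν^2-4))/2 < 1 := by nlinarith [hD, hDnn]
    simp only [if_pos h]
    constructor <;> linarith
  · have hν2 : ν < -2 := by rcases abs_cases ν with ⟨he,_⟩|⟨he,_⟩ <;> linarith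
    have hDlt : Real.sqrt (ν^2-4) < -ν := by nlinarith [hDnn, hD]
    have h1 : (ν + Real.sqrt (ν^2-4))/2 < 0 := by linarith
    have h2 : -1 < (ν + Real.sqrt (ν^2-4))/2 := by nlinarith [hD, hDnn]
    simp only [if_neg (not_le.mpr h)]
    constructor <;> linarith

/-- R2: for real `ν` with `|ν| > 2`, any solution of `a (n+2) = ν a (n+1) - a n`
tending to zero is `a n = a 0 * r^n` with `r = smallRoot ν`. -/
lemma rec_geom_of_two_lt_abs {ν : ℝ} (hν : 2 < |ν|) {a : ℕ → ℂ}
    (ha : ∀ n, a (n+2) = ν * a (n+1) - a n) (h0 : Tendsto a atTop (𝓝 0)) :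
    ∀ n, a n = a 0 * (smallRoot ν : ℂ)^n := by
  set r : ℝ := smallRoot ν with hr
  set R : ℝ := ν - r with hRdef
  have hroot : r^2 - ν*r + 1 = 0 := smallRoot_root hν
  have hrne : r ≠ 0 := smallRoot_ne_zero hν
  have hrlt : |r| < 1 := smallRoot_abs_lt_one hν
  have hrR : r * R = 1 := by rw [hRdef]; nlinarith [hroot]
  have hRroot : R^2 - ν*R + 1 = 0 := by rw [hRdef]; nlinarith [hroot]
  have hRgt : 1 < |R| := by
    have h1 : |r| * |R| = 1 := by rw [← abs_mul, hrR, abs_one]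
    have h2 : 0 < |r| := abs_pos.mpr hrne
    by_contra h
    push_neg at h
    nlinarith
  have hrRne : (r:ℂ) ≠ (R:ℂ) := by
    intro h
    have e1 : r = R := by exact_mod_cast h
    have e2 : r^2 = 1 := by linear_combination hrR + r * e1
    have e3 : |r|^2 = 1 := by rw [_root_.sq_abs]; exact e2
    nlinarith [abs_nonneg r, hrlt]
  have hsub : (r:ℂ) - R ≠ 0 := sub_ne_zero.mpr hrRne
  set α : ℂ := (a 1 - R * a 0)/((r:ℂ) - R) with hα
  set β : ℂ := (a 1 - r * a 0)/((R:ℂ) - r) with hβ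
  have hsub' : (R:ℂ) - r ≠ 0 := fun h => hsub (by linear_combination -h)
  -- a n = α r^n + β R^n
  have hab : ∀ n, a n = α * (r:ℂ)^n + β * (R:ℂ)^n := by
    have base : ∀ n, a n = α * (r:ℂ)^n + β * (R:ℂ)^n ∧
        a (n+1) = α * (r:ℂ)^(n+1) + β * (R:ℂ)^(n+1) := by
      intro n
      induction n with
      | zero =>
        constructor
        · simp only [pow_zero, mul_one, hα, hβ]
          field_simp
          ring
        · simp only [pow_one, hα, hβ]
          field_simp
          ring
      | succ k ih =>
        refine ⟨ih.2, ?_⟩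
        rw [ha k, ih.1, ih.2]
        have hrc : (r:ℂ)^(k+2) = ν * (r:ℂ)^(k+1) - (r:ℂ)^k := by
          have : ((r:ℝ)^2 - ν*r + 1 : ℝ) = 0 := hroot
          have hc : (r:ℂ)^2 - (ν:ℂ)*(r:ℂ) + 1 = 0 := by exact_mod_cast congrArg (Complex.ofReal) this
          ring_nf
          linear_combination ((r:ℂ))^k * hc
        have hRc : (R:ℂ)^(k+2) = ν * (R:ℂ)^(k+1) - (R:ℂ)^k := by
          have : ((R:ℝ)^2 - ν*R + 1 : ℝ) = 0 := hRroot
          have hc : (R:ℂ)^2 - (ν:ℂ)*(R:ℂ) + 1 = 0 := by exact_mod_cast congrArg (Complex.ofReal) this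
          ring_nf
          linear_combination ((R:ℂ))^k * hc
        rw [hrc, hRc]; ring
    exact fun n => (base n).1
  -- β = 0
  have hβ0 : β = 0 := by
    by_contra hbne
    have h1 : Tendsto (fun n => α * (r:ℂ)^n) atTop (𝓝 0) := by
      have : Tendsto (fun n => (r:ℂ)^n) atTop (𝓝 0) := by
        apply tendsto_pow_atTop_nhds_zero_of_norm_lt_one
        rw [Complex.norm_real, Real.norm_eq_abs]; exact hrlt
      simpa using this.const_mul α
    have h2 : Tendsto (fun n => β * (R:ℂ)^n) atTop (𝓝 0) := by
      have heq : (fun n => β * (R:ℂ)^n) = fun n => a n - α * (r:ℂ)^n := by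
        funext n; rw [hab n]; ring
      rw [heq]
      simpa using h0.sub h1
    have h3 : Tendsto (fun n => ‖β * (R:ℂ)^n‖) atTop (𝓝 0) := by simpa using h2.norm
    have h4 : ∀ n, ‖β‖ ≤ ‖β * (R:ℂ)^n‖ := by
      intro n
      rw [norm_mul, norm_pow, Complex.norm_real, Real.norm_eq_abs]
      calc ‖β‖ = ‖β‖ * 1 := (mul_one _).symm
      _ ≤ ‖β‖ * |R|^n := by
        gcongr
        exact one_le_pow₀ (le_of_lt hRgt)
    have hge : (0:ℝ) < ‖β‖ := norm_pos_iff.mpr hbne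
    have := (h3.eventually (eventually_lt_nhds hge)).exists
    obtain ⟨n, hn⟩ := this
    exact absurd hn (not_lt.mpr (h4 n))
  -- conclude
  intro n
  have h5 := hab n
  rw [hβ0] at h5
  have h6 := hab 0
  rw [hβ0] at h6
  simp at h6
  rw [h5, h6]
  ring

namespace TreeRays

abbrev G2 := FreeGroup (Fin 2)
abbrev Ltr := Fin 2 × Bool

def elt (a : Ltr) : G2 := FreeGroup.mk [a]
def linv (a : Ltr) : Ltr := (a.1, !a.2)
def wlen (g : G2) : ℕ := g.toWord.length

@[simp] lemma linv_linv (a : Ltr) : linv (linv a) = a := by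
  simp [linv]

lemma elt_linv : ∀ a : Ltr, elt (linv a) = (elt a)⁻¹ := by
  intro a
  rw [elt, elt, FreeGroup.inv_mk]
  simp [FreeGroup.invRev, linv]

@[simp] lemma linv_mul_cancel (a : Ltr) (g : G2) : elt (linv a) * (elt a * g) = g := by
  rw [elt_linv, inv_mul_cancel_left]

@[simp] lemma mul_linv_cancel (a : Ltr) (g : G2) : elt a * (elt (linv a) * g) = g := by
  rw [elt_linv, mul_inv_cancel_left]

lemma elt_mul_eq_mk (a : Ltr) (g : G2) : elt a * g = FreeGroup.mk (a :: g.toWord) := by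
  conv_lhs => rw [← FreeGroup.mk_toWord (x := g)]
  rw [elt, FreeGroup.mul_mk]
  rfl

lemma toWord_elt_mul_nil (a : Ltr) (g : G2) (h : g.toWord = []) :
    (elt a * g).toWord = [a] := by
  rw [elt_mul_eq_mk, FreeGroup.toWord_mk, FreeGroup.reduce.cons]
  rw [show FreeGroup.reduce g.toWord = g.toWord from FreeGroup.reduce_toWord g, h]

lemma toWord_elt_mul_cancel (a : Ltr) (g : G2) (t : List Ltr)
    (h : g.toWord = linv a :: t) : (elt a * g).toWord = t := by
  rw [elt_mul_eq_mk, FreeGroup.toWord_mk, FreeGroup.reduce.cons]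
  rw [show FreeGroup.reduce g.toWord = g.toWord from FreeGroup.reduce_toWord g, h]
  simp [linv]

lemma toWord_elt_mul_cons (a b : Ltr) (g : G2) (t : List Ltr)
    (h : g.toWord = b :: t) (hne : a ≠ linv b) : (elt a * g).toWord = a :: b :: t := by
  rw [elt_mul_eq_mk, FreeGroup.toWord_mk, FreeGroup.reduce.cons]
  rw [show FreeGroup.reduce g.toWord = g.toWord from FreeGroup.reduce_toWord g, h]
  simp only []
  rw [if_neg]
  intro ⟨h1, h2⟩
  apply hne
  obtain ⟨a1, a2⟩ := a; obtain ⟨b1, b2⟩ := b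
  simp only [linv] at h1 h2 ⊢
  simp_all

lemma wlen_one : wlen (1 : G2) = 0 := by simp [wlen, FreeGroup.toWord_one]

lemma wlen_eq_zero_iff (g : G2) : wlen g = 0 ↔ g = 1 := by
  constructor
  · intro h
    have : g.toWord = [] := List.length_eq_zero_iff.mp h
    have := congrArg FreeGroup.mk this
    rw [FreeGroup.mk_toWord] at this
    simpa [FreeGroup.one_eq_mk] using this
  · intro h; rw [h]; exact wlen_one

/-- dichotomy: multiplying by a letter changes length by exactly one. -/
lemma wlen_elt_mul (a : Ltr) (g : G2) :
    wlen (elt a * g) = wlen g + 1 ∨ wlen (elt a * g) + 1 = wlen g := by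
  rcases hw : g.toWord with _ | ⟨b, t⟩
  · left; rw [wlen, toWord_elt_mul_nil a g hw, wlen, hw]; rfl
  · by_cases hab : a = linv b
    · right
      rw [wlen, toWord_elt_mul_cancel a g t (by rw [hw, hab, linv_linv]), wlen, hw]
      simp
    · left
      rw [wlen, toWord_elt_mul_cons a b g t hw hab, wlen, hw]
      simp

/-- if the length goes up, the word of the product is the letter consed on. -/
lemma toWord_up (a : Ltr) (g : G2) (h : wlen (elt a * g) = wlen g + 1) :
    (elt a * g).toWord = a :: g.toWord := by
  rcases hw : g.toWord with _ | ⟨b, t⟩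
  · rw [toWord_elt_mul_nil a g hw]
  · by_cases hab : a = linv b
    · exfalso
      have h2 : (elt a * g).toWord = t := by
        apply toWord_elt_mul_cancel a g t
        rw [hw, hab]; simp [linv]
      rw [wlen, wlen, h2, hw] at h
      simp at h; omega
    · rw [toWord_elt_mul_cons a b g t hw hab]

/-- up-condition characterization: for `g` with word `b :: t`, going up iff `a ≠ linv b`. -/
lemma up_iff (a b : Ltr) (g : G2) (t : List Ltr) (hw : g.toWord = b :: t) :
    wlen (elt a * g) = wlen g + 1 ↔ a ≠ linv b := by
  constructor
  · intro h hab
    have h2 : (elt a * g).toWord = t := by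
      apply toWord_elt_mul_cancel a g t
      rw [hw, hab]; simp [linv]
    rw [wlen, wlen, h2, hw] at h
    simp at h; omega
  · intro hab
    rw [wlen, toWord_elt_mul_cons a b g t hw hab, wlen, hw]
    simp

lemma up_of_one (a : Ltr) : wlen (elt a * 1) = wlen (1:G2) + 1 := by
  rw [wlen, toWord_elt_mul_nil a 1 FreeGroup.toWord_one, wlen_one]
  rfl


open Finset

lemma sphere_set_finite (n : ℕ) : {g : G2 | wlen g = n}.Finite := by
  have h1 : {l : List Ltr | l.length = n}.Finite := List.finite_length_eq Ltr n
  have h2 : {g : G2 | wlen g = n} ⊆ FreeGroup.toWord ⁻¹' {l | l.length = n} := fun g hg => hg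
  exact (h1.preimage (Set.injOn_of_injective FreeGroup.toWord_injective)).subset h2

def sphereF (n : ℕ) : Finset G2 := (sphere_set_finite n).toFinset

lemma mem_sphereF {g : G2} {n : ℕ} : g ∈ sphereF n ↔ wlen g = n := by
  simp [sphereF, Set.Finite.mem_toFinset]

lemma sphereF_zero : sphereF 0 = {1} := by
  ext g; simp [mem_sphereF, wlen_eq_zero_iff]

section Sums
variable {M : Type*} [AddCommMonoid M]

/-- sphere sums -/
def sSum (c : G2 → M) (n : ℕ) : M := ∑ g ∈ sphereF n, c g

open Classical in
lemma up_sum (c : G2 → M) (m : ℕ) :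
    ∑ p ∈ (Finset.univ ×ˢ sphereF m).filter
      (fun p : Ltr × G2 => wlen (elt p.1 * p.2) = m + 1), c (elt p.1 * p.2)
    = sSum c (m+1) := by
  apply Finset.sum_nbij' (i := fun p : Ltr × G2 => elt p.1 * p.2)
    (j := fun h : G2 => (h.toWord.headI, elt (linv h.toWord.headI) * h))
  · intro p hp
    simp only [Finset.mem_filter, Finset.mem_product, mem_sphereF] at hp ⊢
    exact hp.2
  · intro h hh
    simp only [mem_sphereF] at hh
    rcases hw : h.toWord with _ | ⟨b, t⟩
    · exfalso; rw [wlen, hw] at hh; simp at hh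
    · simp only [Finset.mem_filter, Finset.mem_product, Finset.mem_univ, true_and,
        mem_sphereF, hw, List.headI]
      have hcan : (elt (linv b) * h).toWord = t :=
        toWord_elt_mul_cancel (linv b) h t (by rw [linv_linv]; exact hw)
      constructor
      · rw [wlen, hcan]
        rw [wlen, hw] at hh
        simpa using Nat.succ_injective hh
      · rw [mul_linv_cancel]; exact hh
  · intro p hp
    simp only [Finset.mem_filter, Finset.mem_product, mem_sphereF] at hp
    obtain ⟨⟨-, hg⟩, hup⟩ := hp
    have := toWord_up p.1 p.2 (by rw [hup, hg])
    rw [this]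
    simp only [List.headI]
    rw [linv_mul_cancel]
  · intro h hh
    simp only [mem_sphereF] at hh
    rw [mul_linv_cancel]
  · intro p _
    rfl

open Classical in
lemma down_sum (c : G2 → M) (n : ℕ) :
    ∑ p ∈ (Finset.univ ×ˢ sphereF (n+1)).filter
      (fun p : Ltr × G2 => ¬ wlen (elt p.1 * p.2) = (n+1) + 1), c (elt p.1 * p.2)
    = ∑ q ∈ (Finset.univ ×ˢ sphereF n).filter
      (fun q : Ltr × G2 => wlen (elt q.1 * q.2) = n + 1), c q.2 := by
  apply Finset.sum_nbij' (i := fun p : Ltr × G2 => (linv p.1, elt p.1 * p.2))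
    (j := fun q : Ltr × G2 => (linv q.1, elt q.1 * q.2))
  · intro p hp
    simp only [Finset.mem_filter, Finset.mem_product, Finset.mem_univ, true_and,
      mem_sphereF] at hp ⊢
    obtain ⟨hg, hnup⟩ := hp
    rcases wlen_elt_mul p.1 p.2 with hup | hdn
    · exact absurd (by rw [hup, hg]) hnup
    · constructor
      · rw [hg] at hdn; omega
      · rw [linv_mul_cancel]; exact hg
  · intro q hq
    simp only [Finset.mem_filter, Finset.mem_product, Finset.mem_univ, true_and,
      mem_sphereF] at hq ⊢
    obtain ⟨hh, hup⟩ := hq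
    refine ⟨hup, ?_⟩
    rw [linv_mul_cancel, hh]
    omega
  · intro p _
    simp [linv_linv, linv_mul_cancel]
  · intro q _
    simp [linv_linv, linv_mul_cancel]
  · intro p hp
    simp [linv_mul_cancel]

open Classical in
lemma fiber_sum (c : G2 → M) (m : ℕ) :
    ∑ q ∈ (Finset.univ ×ˢ sphereF m).filter
      (fun q : Ltr × G2 => wlen (elt q.1 * q.2) = m + 1), c q.2
    = ∑ h ∈ sphereF m,
        ((Finset.univ.filter (fun a : Ltr => wlen (elt a * h) = m + 1)).card) • c h := by
  have hmem : ∀ p : Ltr × G2, p ∈ (Finset.univ ×ˢ sphereF m).filter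
      (fun q : Ltr × G2 => wlen (elt q.1 * q.2) = m + 1) ↔
      p.2 ∈ sphereF m ∧ p.1 ∈ Finset.univ.filter (fun a : Ltr => wlen (elt a * p.2) = m + 1) := by
    intro p
    simp only [Finset.mem_filter, Finset.mem_product, Finset.mem_univ, true_and]
  rw [Finset.sum_finset_product_right _ (sphereF m)
      (fun h => Finset.univ.filter (fun a : Ltr => wlen (elt a * h) = m + 1)) hmem]
  apply Finset.sum_congr rfl
  intro h _
  exact Finset.sum_const (c h)

open Classical in
lemma upcount_ne_one {h : G2} {m : ℕ} (hm : wlen h = m) (hne : h ≠ 1) :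
    (Finset.univ.filter (fun a : Ltr => wlen (elt a * h) = m + 1)).card = 3 := by
  rcases hw : h.toWord with _ | ⟨b, t⟩
  · exfalso
    apply hne
    rw [← (wlen_eq_zero_iff h)]
    rw [wlen, hw]; rfl
  · have hfe : (Finset.univ.filter (fun a : Ltr => wlen (elt a * h) = m + 1))
        = Finset.univ.filter (fun a : Ltr => a ≠ linv b) := by
      apply Finset.filter_congr
      intro a _
      rw [← hm]
      exact up_iff a b h t hw
    rw [hfe, Finset.filter_ne', Finset.card_erase_of_mem (Finset.mem_univ _)]
    rfl

open Classical in
lemma upcount_one :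
    (Finset.univ.filter (fun a : Ltr => wlen (elt a * 1) = 0 + 1)).card = 4 := by
  have : (Finset.univ.filter (fun a : Ltr => wlen (elt a * 1) = 0 + 1)) = Finset.univ := by
    apply Finset.filter_true_of_mem
    intro a _
    have := up_of_one a
    rw [wlen_one] at this
    exact this
  rw [this]
  rfl

open Classical in
lemma pair_split (c : G2 → M) (n : ℕ) :
    ∑ g ∈ sphereF n, ∑ a : Ltr, c (elt a * g)
    = (∑ p ∈ (Finset.univ ×ˢ sphereF n).filter
        (fun p : Ltr × G2 => wlen (elt p.1 * p.2) = n + 1), c (elt p.1 * p.2))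
      + ∑ p ∈ (Finset.univ ×ˢ sphereF n).filter
        (fun p : Ltr × G2 => ¬ wlen (elt p.1 * p.2) = n + 1), c (elt p.1 * p.2) := by
  rw [Finset.sum_filter_add_sum_filter_not]
  rw [Finset.sum_product]
  exact Finset.sum_comm

end Sums

section Master
variable (c : G2 → ℂ) {μ : ℝ}

open Classical in
lemma master_succ (heq : ∀ g : G2, (μ:ℂ) * c g = ∑ a : Ltr, c (elt a * g)) (n : ℕ) :
    (μ:ℂ) * sSum c (n+1) = sSum c (n+2)
      + (if n = 0 then 4 * sSum c 0 else 3 * sSum c n) := by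
  have h1 : (μ:ℂ) * sSum c (n+1) = ∑ g ∈ sphereF (n+1), ∑ a : Ltr, c (elt a * g) := by
    rw [sSum, Finset.mul_sum]
    exact Finset.sum_congr rfl (fun g _ => heq g)
  rw [h1, pair_split c (n+1), up_sum c (n+1), down_sum c n, fiber_sum c n]
  congr 1
  rcases n with _ | m
  · rw [sphereF_zero, Finset.sum_singleton, upcount_one, sSum, sphereF_zero,
      Finset.sum_singleton]
    push_cast
    ring
  · have : ∀ h ∈ sphereF (m+1),
        ((Finset.univ.filter (fun a : Ltr => wlen (elt a * h) = (m+1) + 1)).card) • c h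
        = 3 * c h := by
      intro h hh
      rw [mem_sphereF] at hh
      rw [upcount_ne_one hh (by intro h1; rw [h1, wlen_one] at hh; omega)]
      push_cast
      ring
    rw [Finset.sum_congr rfl this]
    simp only [if_neg (Nat.succ_ne_zero m), sSum, Finset.mul_sum]

open Classical in
lemma master_zero (heq : ∀ g : G2, (μ:ℂ) * c g = ∑ a : Ltr, c (elt a * g)) :
    (μ:ℂ) * sSum c 0 = sSum c 1 := by
  have h1 : (μ:ℂ) * sSum c 0 = ∑ g ∈ sphereF 0, ∑ a : Ltr, c (elt a * g) := by
    rw [sSum, Finset.mul_sum]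
    exact Finset.sum_congr rfl (fun g _ => heq g)
  rw [h1, pair_split c 0]
  have h2 : ∀ p : Ltr × G2, p ∈ Finset.univ ×ˢ sphereF 0 → wlen (elt p.1 * p.2) = 0 + 1 := by
    intro p hp
    rw [Finset.mem_product, mem_sphereF, wlen_eq_zero_iff] at hp
    rw [hp.2]
    have := up_of_one p.1
    rw [wlen_one] at this
    exact this
  rw [Finset.filter_true_of_mem h2]
  have h3 : (Finset.univ ×ˢ sphereF 0).filter
      (fun p : Ltr × G2 => ¬ wlen (elt p.1 * p.2) = 0 + 1) = ∅ := by
    rw [Finset.filter_eq_empty_iff]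
    intro p hp
    simpa using h2 p hp
  rw [h3, Finset.sum_empty, add_zero]
  have := up_sum c 0
  rw [Finset.filter_true_of_mem h2] at this
  exact this

end Master

open Classical in
lemma card_sphere_succ (n : ℕ) : (sphereF (n+1)).card
    = ∑ h ∈ sphereF n, (Finset.univ.filter (fun a : Ltr => wlen (elt a * h) = n + 1)).card := by
  have h1 := up_sum (M := ℕ) (fun _ => 1) n
  have h2 := fiber_sum (M := ℕ) (fun _ => 1) n
  rw [h1] at h2
  rw [show (sphereF (n+1)).card = sSum (M := ℕ) (fun _ => 1) (n+1) from
    (by rw [sSum]; exact Finset.card_eq_sum_ones _), h2]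
  exact Finset.sum_congr rfl (fun h _ => by simp)

lemma card_sphere_le (n : ℕ) : (sphereF n).card ≤ 4 * 3^n := by
  induction n with
  | zero => rw [sphereF_zero]; norm_num
  | succ n ih =>
    rw [card_sphere_succ n]
    rcases n with _ | m
    · rw [sphereF_zero, Finset.sum_singleton, upcount_one]
      norm_num
    · have heq : ∀ h ∈ sphereF (m+1),
          (Finset.univ.filter (fun a : Ltr => wlen (elt a * h) = (m+1) + 1)).card = 3 := by
        intro h hh
        rw [mem_sphereF] at hh
        exact upcount_ne_one hh (by intro h1; rw [h1, wlen_one] at hh; omega)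
      rw [Finset.sum_congr rfl heq, Finset.sum_const, smul_eq_mul]
      calc (sphereF (m+1)).card * 3 ≤ (4 * 3^(m+1)) * 3 := by
            exact Nat.mul_le_mul_right 3 ih
      _ = 4 * 3^(m+2) := by ring


open Classical in
theorem tree_no_eigen_left (c : G2 → ℂ) (hsum : Summable fun g => ‖c g‖^2) (μ : ℝ)
    (heq : ∀ g : G2, (μ:ℂ) * c g = ∑ a : Ltr, c (elt a * g)) : c 1 = 0 := by
  set s : ℕ → ℂ := sSum c with hs
  set t : ℕ → ℝ := fun n => ∑ g ∈ sphereF n, ‖c g‖^2 with ht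
  have htnn : ∀ n, 0 ≤ t n := fun n => Finset.sum_nonneg (fun g _ => sq_nonneg _)
  have htsum : Summable t := by
    apply summable_of_sum_range_le htnn
    intro N
    calc ∑ n ∈ Finset.range N, t n
        = ∑ g ∈ (Finset.range N).biUnion sphereF, ‖c g‖^2 := by
          rw [Finset.sum_biUnion]
          intro m _ m' _ hne
          simp only [Function.onFun]
          rw [Finset.disjoint_left]
          intro g hg hg'
          rw [mem_sphereF] at hg hg'
          exact hne (hg ▸ hg'.symm ▸ rfl)
    _ ≤ ∑' g : G2, ‖c g‖^2 := Summable.sum_le_tsum _ (fun g _ => sq_nonneg _) hsum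
  have htt : Tendsto t atTop (𝓝 0) := htsum.tendsto_atTop_zero
  set w : ℂ := ((Real.sqrt 3 : ℝ) : ℂ) with hw
  have h3 : (0:ℝ) < Real.sqrt 3 := Real.sqrt_pos.mpr (by norm_num)
  have h3c : w ≠ 0 := by
    rw [hw]; exact_mod_cast ne_of_gt h3
  have hsq3 : w^2 = 3 := by
    rw [hw, ← Complex.ofReal_pow, Real.sq_sqrt (by norm_num : (0:ℝ) ≤ 3)]
    norm_num
  set ν : ℝ := μ / Real.sqrt 3 with hν
  have hμν : (μ:ℂ) = (ν:ℂ) * w := by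
    rw [hν, hw]; push_cast; field_simp
  set u : ℕ → ℂ := fun n => s (n+1) / w^(n+1) with hu
  have huap : ∀ n, u n = s (n+1) / w^(n+1) := fun n => rfl
  have hm0 : (μ:ℂ) * s 0 = s 1 := master_zero c heq
  have hmS : ∀ n, (μ:ℂ) * s (n+1) = s (n+2) + (if n = 0 then 4 * s 0 else 3 * s n) :=
    fun n => master_succ c heq n
  have hurec : ∀ n, u (n+2) = ν * u (n+1) - u n := by
    intro n
    have hrec := hmS (n+1)
    rw [if_neg (Nat.succ_ne_zero n), show n+1+1 = n+2 from rfl,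
      show n+1+2 = n+3 from rfl] at hrec
    have hstep : s (n+3) = (μ:ℂ) * s (n+2) - w^2 * s (n+1) := by
      rw [hsq3]; linear_combination -hrec
    rw [huap, huap, huap]
    rw [show n+2+1 = n+3 from rfl, show n+1+1 = n+2 from rfl]
    rw [hstep, hμν]
    field_simp
    ring
  have hnormw : ‖w‖ = Real.sqrt 3 := by
    rw [hw, Complex.norm_real, Real.norm_eq_abs, abs_of_pos h3]
  have hut : Tendsto u atTop (𝓝 0) := by
    apply tendsto_zero_of_sq_le (b := fun n => 4 * t (n+1))
    · have h4 : Tendsto (fun n => t (n+1)) atTop (𝓝 0) := htt.comp (tendsto_add_atTop_nat 1)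
      simpa using h4.const_mul 4
    · intro n
      have hcs : ‖s (n+1)‖^2 ≤ (sphereF (n+1)).card * t (n+1) := by
        calc ‖s (n+1)‖^2 ≤ (∑ g ∈ sphereF (n+1), ‖c g‖)^2 := by
              apply pow_le_pow_left₀ (norm_nonneg _)
              exact norm_sum_le _ _
        _ ≤ (sphereF (n+1)).card * ∑ g ∈ sphereF (n+1), ‖c g‖^2 :=
              sq_sum_le_card_mul_sum_sq
        _ = (sphereF (n+1)).card * t (n+1) := rfl
      have hpow : ‖u n‖^2 = ‖s (n+1)‖^2 / 3^(n+1) := by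
        rw [huap, norm_div, div_pow, norm_pow, hnormw]
        congr 1
        rw [← pow_mul, mul_comm (n+1) 2, pow_mul, Real.sq_sqrt (by norm_num : (0:ℝ) ≤ 3)]
      rw [hpow]
      have hcard : ((sphereF (n+1)).card : ℝ) ≤ 4 * 3^(n+1) := by
        exact_mod_cast card_sphere_le (n+1)
      have h3pos : (0:ℝ) < 3^(n+1) := by positivity
      rw [div_le_iff₀ h3pos]
      calc ‖s (n+1)‖^2 ≤ (sphereF (n+1)).card * t (n+1) := hcs
      _ ≤ (4 * 3^(n+1)) * t (n+1) :=
            mul_le_mul_of_nonneg_right hcard (htnn (n+1))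
      _ = 4 * t (n+1) * 3^(n+1) := by ring
  have hs0 : s 0 = 0 := by
    rcases le_or_gt |ν| 2 with hle | hgt
    · have hz := rec_zero_of_abs_le_two hle hurec hut
      have hsz : ∀ n, s (n+1) = 0 := by
        intro n
        have hzn := hz n
        rw [huap n] at hzn
        exact (div_eq_zero_iff.mp hzn).resolve_right (pow_ne_zero _ h3c)
      have h1 := hmS 0
      rw [if_pos rfl, hsz 0, hsz 1, mul_zero] at h1
      have h2 : (4:ℂ) * s 0 = 0 := by linear_combination -h1
      simpa using h2
    · have hgeo := rec_geom_of_two_lt_abs hgt hurec hut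
      set ρ : ℝ := smallRoot ν with hρ
      have hroot := smallRoot_root hgt
      have hρne := smallRoot_ne_zero hgt
      have hρlt := smallRoot_abs_lt_one hgt
      have hs2 : s 2 = (ρ:ℂ) * w * s 1 := by
        have h11 : s 2 = u 1 * w^2 := by
          rw [huap]; field_simp
        rw [h11, hgeo 1, huap 0]
        field_simp
        ring
      have h1 := hmS 0
      rw [if_pos rfl] at h1
      have hfac : ((μ:ℂ)^2 - (ρ:ℂ) * w * (μ:ℂ) - 4) * s 0 = 0 := by
        linear_combination ((μ:ℂ) - (ρ:ℂ)*w) * hm0 + h1 + hs2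
      have hKne : ((μ:ℂ)^2 - (ρ:ℂ) * w * (μ:ℂ) - 4) ≠ 0 := by
        rw [hμν]
        have hKr : ((ν:ℂ)*w)^2 - (ρ:ℂ)*w*((ν:ℂ)*w) - 4 = ((3*ν^2 - 3*ρ*ν - 4 : ℝ) : ℂ) := by
          push_cast
          linear_combination ((ν:ℂ)^2 - (ρ:ℂ)*(ν:ℂ)) * hsq3
        rw [hKr, Complex.ofReal_ne_zero]
        have hρ2 : ρ^2 < 1 := by nlinarith [_root_.sq_abs ρ, hρlt, abs_nonneg ρ]
        have hρpos : 0 < ρ^2 := by positivity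
        have hνρ : ν * ρ = ρ^2 + 1 := by linear_combination -hroot
        intro hK
        nlinarith [hνρ, hρ2, hρpos, sq_nonneg ν, sq_nonneg ρ, sq_nonneg (ν*ρ)]
      rcases mul_eq_zero.mp hfac with h | h
      · exact absurd h hKne
      · exact h
  have hc1 : s 0 = c 1 := by rw [hs]; rw [sSum, sphereF_zero, Finset.sum_singleton]
  rw [← hc1]
  exact hs0

open Classical in
theorem tree_no_eigen_right (c : G2 → ℂ) (hsum : Summable fun g => ‖c g‖^2) (μ : ℝ)
    (heqr : ∀ g : G2, (μ:ℂ) * c g = ∑ a : Ltr, c (g * elt a)) : ∀ v : G2, c v = 0 := by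
  intro v
  set d : G2 → ℂ := fun g => c (v * g⁻¹) with hd
  have hdsum : Summable fun g => ‖d g‖^2 := by
    set e : G2 ≃ G2 := (Equiv.inv G2).trans (Equiv.mulLeft v) with he
    have : (fun g => ‖d g‖^2) = (fun g => ‖c g‖^2) ∘ e := rfl
    rw [this]
    exact e.summable_iff.mpr hsum
  have hdeq : ∀ g : G2, (μ:ℂ) * d g = ∑ a : Ltr, d (elt a * g) := by
    intro g
    have h1 : ∀ a : Ltr, d (elt a * g) = c ((v * g⁻¹) * elt (linv a)) := by
      intro a
      rw [hd]
      simp only [mul_inv_rev]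
      rw [elt_linv, mul_assoc]
    have h2 : ∑ a : Ltr, d (elt a * g) = ∑ a : Ltr, c ((v * g⁻¹) * elt a) := by
      rw [Finset.sum_congr rfl (fun a _ => h1 a)]
      exact Fintype.sum_equiv (Function.Involutive.toPerm linv (fun a => linv_linv a))
        _ _ (fun a => rfl)
    rw [h2, ← heqr (v * g⁻¹)]
  have := tree_no_eigen_left d hdsum μ hdeq
  rw [hd] at this
  simpa using this

end TreeRays


/-- The adjacency operator `H̃` of the 4-regular tree with a ray attached
at every vertex has no eigenvalues. -/
theorem tree_with_rays_no_eigenvalues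
    (H : l2TreeRays →L[ℂ] l2TreeRays) (hHsa : IsSelfAdjoint H)
    (hH0 : ∀ (f : l2TreeRays) (g : FreeGroup (Fin 2)),
      H f (g, 0) = f (g * FreeGroup.of 0, 0) + f (g * (FreeGroup.of 0)⁻¹, 0)
        + f (g * FreeGroup.of 1, 0) + f (g * (FreeGroup.of 1)⁻¹, 0) + f (g, 1))
    (hHn : ∀ (f : l2TreeRays) (g : FreeGroup (Fin 2)) (n : ℕ),
      H f (g, n + 1) = f (g, n) + f (g, n + 2)) :
    ¬ ∃ (lam : ℂ) (f : l2TreeRays), f ≠ 0 ∧ H f = lam • f := by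
  rintro ⟨lam, f, hf0, hEig⟩
  have hAp : ∀ x : FreeGroup (Fin 2) × ℕ, H f x = lam * f x := by
    intro x
    rw [hEig]
    rw [lp.coeFn_smul]
    rfl
  have hsumtot : Summable fun x : FreeGroup (Fin 2) × ℕ => ‖f x‖^2 := by
    have h := (lp.memℓp f).summable (by norm_num : 0 < (2:ENNReal).toReal)
    have he : ∀ x : FreeGroup (Fin 2) × ℕ, ‖f x‖ ^ ((2:ENNReal)).toReal = ‖f x‖^2 := by
      intro x
      rw [show ((2:ENNReal)).toReal = ((2:ℕ):ℝ) from by norm_num, Real.rpow_natCast]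
    exact (summable_congr he).mp h
  have hraysum : ∀ g : FreeGroup (Fin 2), Summable fun n => ‖f (g, n)‖^2 := by
    intro g
    apply hsumtot.comp_injective (i := fun n => (g, n))
    intro a b h
    simpa using h
  have hraytend : ∀ g, Filter.Tendsto (fun n => f (g, n)) Filter.atTop (𝓝 0) :=
    fun g => tendsto_zero_of_summable_sq (hraysum g)
  have hreal : lam = (lam.re : ℂ) := by
    have h1 := hHsa.isSymmetric f f
    rw [ContinuousLinearMap.coe_coe, hEig, inner_smul_left, inner_smul_right] at h1
    have hffne : (inner ℂ f f : ℂ) ≠ 0 := by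
      simpa [inner_self_eq_zero] using hf0
    have h2 : (starRingEnd ℂ) lam = lam := mul_right_cancel₀ hffne h1
    exact (Complex.conj_eq_iff_re.mp h2).symm
  set ν0 : ℝ := lam.re with hν0
  have hcast : ((ν0:ℝ):ℂ) = lam := hreal.symm
  have hray : ∀ g n, f (g, n+2) = (ν0:ℂ) * f (g, n+1) - f (g, n) := by
    intro g n
    have h := hHn f g n
    rw [hAp (g, n+1)] at h
    rw [hcast]
    linear_combination -h
  rcases le_or_gt |ν0| 2 with hle | hgt
  · apply hf0
    apply lp.ext
    rw [lp.coeFn_zero]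
    funext x
    obtain ⟨g, n⟩ := x
    exact rec_zero_of_abs_le_two hle (hray g) (hraytend g) n
  · set r : ℝ := smallRoot ν0 with hr
    have hgeo : ∀ g n, f (g, n) = f (g, 0) * (r:ℂ)^n :=
      fun g => rec_geom_of_two_lt_abs hgt (hray g) (hraytend g)
    set c : TreeRays.G2 → ℂ := fun g => f (g, 0) with hc
    have hcap : ∀ g : TreeRays.G2, c g = f (g, 0) := fun _ => rfl
    have hcsum : Summable fun g => ‖c g‖^2 := by
      apply hsumtot.comp_injective (i := fun g : TreeRays.G2 => (g, 0))
      intro a b h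
      simpa using h
    set μ0 : ℝ := ν0 - r with hμ0
    have hceq : ∀ g, (μ0:ℂ) * c g = ∑ a : TreeRays.Ltr, c (g * TreeRays.elt a) := by
      intro g
      have h0 := hH0 f g
      rw [hAp (g, 0)] at h0
      have h1 : f (g, 1) = c g * (r:ℂ) := by rw [hcap, hgeo g 1, pow_one]
      have hexp : ∑ a : TreeRays.Ltr, c (g * TreeRays.elt a)
          = c (g * FreeGroup.of 0) + c (g * (FreeGroup.of 0)⁻¹)
            + c (g * FreeGroup.of 1) + c (g * (FreeGroup.of 1)⁻¹) := by
        have e1 : TreeRays.elt ((0 : Fin 2), true) = FreeGroup.of 0 := rfl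
        have e3 : TreeRays.elt ((1 : Fin 2), true) = FreeGroup.of 1 := rfl
        have e2 : TreeRays.elt ((0 : Fin 2), false) = (FreeGroup.of 0)⁻¹ := by
          rw [show ((0 : Fin 2), false) = TreeRays.linv ((0 : Fin 2), true) from rfl,
            TreeRays.elt_linv, e1]
        have e4 : TreeRays.elt ((1 : Fin 2), false) = (FreeGroup.of 1)⁻¹ := by
          rw [show ((1 : Fin 2), false) = TreeRays.linv ((1 : Fin 2), true) from rfl,
            TreeRays.elt_linv, e3]
        rw [show (Finset.univ : Finset TreeRays.Ltr)
            = {((0:Fin 2),true),((0:Fin 2),false),((1:Fin 2),true),((1:Fin 2),false)} from by decide]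
        rw [Finset.sum_insert (by decide), Finset.sum_insert (by decide),
          Finset.sum_insert (by decide), Finset.sum_singleton]
        rw [e1, e2, e3, e4]
        ring
      rw [hexp]
      rw [← hcap g, ← hcap (g * FreeGroup.of 0), ← hcap (g * (FreeGroup.of 0)⁻¹),
        ← hcap (g * FreeGroup.of 1), ← hcap (g * (FreeGroup.of 1)⁻¹), h1] at h0
      push_cast [hμ0]
      rw [hcast]
      linear_combination h0
    have hc0 := TreeRays.tree_no_eigen_right c hcsum μ0 hceq
    apply hf0
    apply lp.ext
    rw [lp.coeFn_zero]
    funext x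
    obtain ⟨g, n⟩ := x
    show f (g, n) = 0
    rw [hgeo g n, ← hcap g, hc0 g, zero_mul]

end
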